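/- For every n ≥ 5, the arrangement K'_{⌊n/2⌋,n} can be transformed into the arrangement B_n in exactly 2n−7 LRE moves when n is even, and in exactly 2n−5 LRE moves when n is odd; that is, there exist that many generators g_1, g_2, … ∈ G with K'_{⌊n/2⌋,n} ∘ g_1 ∘ ⋯ = B_n. -/

import Mathlib

/-!
Write `ρ = στ` and `μ = σ⁻¹τ`. On positions, `ρ` is the `(n-1)`-cycle `0 → 2 → 3 → ⋯ → n-1 → 0`
fixing `1`, and `μ` is the `(n-1)`-cycle `1 → n-1 → n-2 → ⋯ → 2 → 1` fixing `0`. They shift in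
opposite directions, so `ρ^k μ^k` fixes every position except those near the two fixed points:
it is the 3-cycle `0 ↦ k+1 ↦ 1 ↦ 0`. With `k = ⌈n/2⌉ - 2`, composing `K'` with `τ ρ^k μ^k` yields `B`,
and the word `τ (στ)^k (σ⁻¹τ)^k` has length `4k + 1`, which is `2n - 7` or `2n - 5`.
-/

namespace LRE

open Equiv

variable {n : ℕ}

def IsLeftRotation (σ : Perm (Fin n)) : Prop :=
  ∀ i : Fin n, (σ i : ℕ) = ((i : ℕ) + 1) % n

def IsExchange (τ : Perm (Fin n)) : Prop :=
  ∀ i : Fin n, (τ i : ℕ) = if (i : ℕ) = 0 then 1 else if (i : ℕ) = 1 then 0 else (i : ℕ)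

theorem IsLeftRotation.val_apply {σ : Perm (Fin n)} (hσ : IsLeftRotation σ) (i : Fin n) :
    (σ i : ℕ) = if (i : ℕ) + 1 = n then 0 else (i : ℕ) + 1 := by
  rw [hσ]
  split_ifs with h
  · rw [h, Nat.mod_self]
  · exact Nat.mod_eq_of_lt (by omega)

theorem IsLeftRotation.val_inv_apply {σ : Perm (Fin n)} (hσ : IsLeftRotation σ) (i : Fin n) :
    (σ⁻¹ i : ℕ) = if (i : ℕ) = 0 then n - 1 else (i : ℕ) - 1 := by
  have h := hσ.val_apply (σ⁻¹ i)
  rw [← Perm.mul_apply, mul_inv_cancel, Perm.one_apply] at h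
  have := (σ⁻¹ i).isLt
  split_ifs at h ⊢ <;> omega

theorem IsLeftRotation.val_mul_apply {σ τ : Perm (Fin n)} (hσ : IsLeftRotation σ)
    (hτ : IsExchange τ) (hn : 2 < n) (i : Fin n) :
    ((σ * τ) i : ℕ) =
      if (i : ℕ) = 0 then 2 else if (i : ℕ) = 1 then 1
      else if (i : ℕ) + 1 = n then 0 else (i : ℕ) + 1 := by
  rw [Perm.mul_apply, hσ.val_apply, hτ]
  split_ifs <;> omega

theorem IsLeftRotation.val_inv_mul_apply {σ τ : Perm (Fin n)} (hσ : IsLeftRotation σ)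
    (hτ : IsExchange τ) (hn : 1 < n) (i : Fin n) :
    ((σ⁻¹ * τ) i : ℕ) =
      if (i : ℕ) = 0 then 0 else if (i : ℕ) = 1 then n - 1 else (i : ℕ) - 1 := by
  rw [Perm.mul_apply, hσ.val_inv_apply, hτ]
  split_ifs <;> first | omega | contradiction

theorem IsLeftRotation.val_mul_pow_mul_inv_mul_pow_apply {σ τ : Perm (Fin n)}
    (hσ : IsLeftRotation σ) (hτ : IsExchange τ) {k : ℕ} (hk : 1 ≤ k) (hkn : k + 2 < n)
    (i : Fin n) :
    (((σ * τ) ^ k * (σ⁻¹ * τ) ^ k) i : ℕ) =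
      if (i : ℕ) = 0 then k + 1 else if (i : ℕ) = 1 then 0
      else if (i : ℕ) = k + 1 then 1 else (i : ℕ) := by
  induction k, hk using Nat.le_induction generalizing i with
  | base =>
    rw [pow_one, pow_one, Perm.mul_apply, hσ.val_mul_apply hτ (by omega),
      hσ.val_inv_mul_apply hτ (by omega)]
    split_ifs <;> omega
  | succ k hk ih =>
    have hsplit : (σ * τ) ^ (k + 1) * (σ⁻¹ * τ) ^ (k + 1) =
        (σ * τ) * ((σ * τ) ^ k * (σ⁻¹ * τ) ^ k) * (σ⁻¹ * τ) := by
      rw [pow_succ' (σ * τ), pow_succ (σ⁻¹ * τ)]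
      simp only [mul_assoc]
    rw [hsplit, Perm.mul_apply, Perm.mul_apply, hσ.val_mul_apply hτ (by omega),
      ih (by omega), hσ.val_inv_mul_apply hτ (by omega)]
    split_ifs <;> first | omega | contradiction

end LRE

section Words

variable {M : Type*}

theorem List.length_flatten_replicate_pair (a b : M) (k : ℕ) :
    ((List.replicate k [a, b]).flatten).length = 2 * k := by
  simp [mul_comm]

theorem List.prod_flatten_replicate_pair [Monoid M] (a b : M) (k : ℕ) :
    ((List.replicate k [a, b]).flatten).prod = (a * b) ^ k := by
  simp [List.prod_flatten]

theorem List.eq_or_eq_of_mem_flatten_replicate_pair {a b g : M} {k : ℕ}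
    (hg : g ∈ (List.replicate k [a, b]).flatten) : g = a ∨ g = b := by
  simp only [List.mem_flatten, List.mem_replicate] at hg
  obtain ⟨l, ⟨-, rfl⟩, hg⟩ := hg
  simpa using hg

end Words

-- Positions are 0-based: `i : Fin n` stands for the paper's position `i + 1`.
/-- For every `n ≥ 5`, the arrangement `K'_{⌊n/2⌋,n}` can be transformed into the
arrangement `B_n` in exactly `2n - 7` LRE moves when `n` is even and `2n - 5` moves when
`n` is odd.  Permutations of `{1,…,n}` are modelled as `Equiv.Perm (Fin n)` with
`i : Fin n` representing the 1-based index `(i : ℕ) + 1`: `σ` is the left-rotation,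
`τ` the transposition of the first two positions; with `r = ⌊n/2⌋`, `K' = K'_{r,n}`
sends `i ↦ n - r + 1 - i` for `1 ≤ i ≤ n - r` and `i ↦ i` for `n - r < i ≤ n`; with
`c = ⌈n/2⌉ = (n+1)/2`, the arrangement `B = B_n` satisfies `B(1) = 1`,
`B(i) = c + 1 - i` for `2 ≤ i ≤ c - 1`, and `B(i) = i` for `c ≤ i ≤ n`.
A move multiplies on the right by an element of `G = {σ, σ⁻¹, τ}`. -/
theorem Kprime_to_B (n : ℕ) (hn : 5 ≤ n)
    (σ τ K' B : Equiv.Perm (Fin n))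
    (hσ : ∀ i : Fin n, (σ i : ℕ) = ((i : ℕ) + 1) % n)
    (hτ : ∀ i : Fin n, (τ i : ℕ) =
      if (i : ℕ) = 0 then 1 else if (i : ℕ) = 1 then 0 else (i : ℕ))
    (hK' : ∀ i : Fin n, (K' i : ℕ) =
      if (i : ℕ) < n - n / 2 then n - n / 2 - 1 - (i : ℕ) else (i : ℕ))
    (hB : ∀ i : Fin n, (B i : ℕ) =
      if (i : ℕ) = 0 then 0
      else if (i : ℕ) < (n + 1) / 2 - 1 then (n + 1) / 2 - 1 - (i : ℕ)
      else (i : ℕ)) :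
    ∃ gs : List (Equiv.Perm (Fin n)),
      (n % 2 = 0 → gs.length = 2 * n - 7) ∧
      (n % 2 = 1 → gs.length = 2 * n - 5) ∧
      (∀ g ∈ gs, g = σ ∨ g = σ⁻¹ ∨ g = τ) ∧
      K' * gs.prod = B := by
  set k := (n + 1) / 2 - 2
  set gs := τ :: ((List.replicate k [σ, τ]).flatten ++ (List.replicate k [σ⁻¹, τ]).flatten)
    with hgs
  have hlength : gs.length = 4 * k + 1 := by
    simp only [hgs, List.length_cons, List.length_append, List.length_flatten_replicate_pair]
    omega
  refine ⟨gs, fun _ ↦ by omega, fun _ ↦ by omega, fun g hg ↦ ?_, ?_⟩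
  · rcases List.mem_cons.1 hg with rfl | hg
    · exact Or.inr (Or.inr rfl)
    rcases List.mem_append.1 hg with hg | hg
    · rcases List.eq_or_eq_of_mem_flatten_replicate_pair hg with rfl | rfl <;> simp
    · rcases List.eq_or_eq_of_mem_flatten_replicate_pair hg with rfl | rfl <;> simp
  · ext i
    rw [hgs, List.prod_cons, List.prod_append, List.prod_flatten_replicate_pair,
      List.prod_flatten_replicate_pair, Equiv.Perm.mul_apply, Equiv.Perm.mul_apply, hK', hτ,
      LRE.IsLeftRotation.val_mul_pow_mul_inv_mul_pow_apply hσ hτ (by omega) (by omega), hB]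
    split_ifs <;> first | omega | contradiction
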